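/- In the billiard inside the convex table K_λ bounded by the level curve {φ = L + 2λ}, suppose a trajectory segment is tangent to H and hits ∂K_λ at a point q. Then the reflected segment is also tangent to H (at the tangent point of the other supporting line through q). Consequently: a chord hitting ∂K_λ at q that crosses the interior of H reflects to a chord that again crosses H, and a chord that misses H reflects to a chord that misses H. -/

import Mathlib

open scoped RealInnerProductSpace ENNReal
open Set Metric Real MeasureTheory Filter

noncomputable section

/-- The Euclidean plane. -/
abbrev E2 : Type := EuclideanSpace ℝ (Fin 2)

/-- The unit vector with angle `θ` to the positive x-axis. -/
def dir (θ : ℝ) : E2 := WithLp.toLp 2 ![Real.cos θ, Real.sin θ]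

/-- Anticlockwise rotation by a right angle. -/
def rot (v : E2) : E2 := WithLp.toLp 2 ![-(v 1), v 0]

/-- `h` is an arc-length parameterisation of the boundary of `H`, a closed
rectifiable curve of length `L`. -/
def IsArcLengthParam (h : ℝ → E2) (L : ℝ) (H : Set E2) : Prop :=
  h '' (Set.Icc 0 L) = frontier H ∧ Set.InjOn h (Set.Ico 0 L) ∧ h 0 = h L ∧
    ∀ s t : ℝ, 0 ≤ s → s ≤ t → t ≤ L →
      eVariationOn h (Set.Icc s t) = ENNReal.ofReal (t - s)

/-- Billiard reflection of `v` in the unit normal `ν`. -/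
def reflect (ν v : E2) : E2 := v - (2 * ⟪v, ν⟫) • ν

/-!
Let `a`, `b` be the directions of the two supporting lines of `H` through `q`: `H` lies in the
wedge at `q` between them and touches the ray arriving at `q` along `a` and the ray leaving `q`
along `b`. The normal `ν` is the unit vector along `b - a`, so reflecting in it swaps `a` and `b`;
since a reflection reverses orientation, `w ↦ -reflect ν w` maps the open wedge onto itself. A ray
from `q` into the open wedge separates the two touching points, so by convexity it meets `H`
(in its interior, if the reversed ray did). If `w` lies on an edge of the wedge, `-reflect ν w`
lies on the other edge, and the ray meets `H` at the touching point there.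
-/

open Topology

@[simp] lemma rot_apply_zero (v : E2) : rot v 0 = -v 1 := rfl

@[simp] lemma rot_apply_one (v : E2) : rot v 1 = v 0 := rfl

lemma inner_eq_coords (u v : E2) : ⟪u, v⟫ = u 0 * v 0 + u 1 * v 1 := by
  simp [PiLp.inner_apply, Fin.sum_univ_two, mul_comm]

lemma inner_rot_eq (u v : E2) : ⟪rot u, v⟫ = u 0 * v 1 - u 1 * v 0 := by
  rw [inner_eq_coords, rot_apply_zero, rot_apply_one]; ring

lemma inner_rot_self (u : E2) : ⟪rot u, u⟫ = 0 := by
  rw [inner_rot_eq]; ring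

lemma inner_rot_swap (u v : E2) : ⟪rot u, v⟫ = -⟪rot v, u⟫ := by
  rw [inner_rot_eq, inner_rot_eq]; ring

lemma rot_neg (u : E2) : rot (-u) = -rot u := by
  ext i; fin_cases i <;> simp

lemma rot_ne_zero {u : E2} (hu : u ≠ 0) : rot u ≠ 0 := by
  contrapose! hu
  ext i; fin_cases i
  · simpa using congrArg (fun v : E2 => v 1) hu
  · simpa using congrArg (fun v : E2 => -v 0) hu

lemma inner_rot_sub_add_smul (u p y : E2) (r : ℝ) :
    ⟪rot u, y - (p + r • u)⟫ = ⟪rot u, y - p⟫ := by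
  rw [← sub_sub, inner_sub_right, real_inner_smul_right, inner_rot_self, mul_zero, sub_zero]

lemma exists_eq_smul_of_inner_rot_eq_zero {u w : E2} (hu : u ≠ 0) (h : ⟪rot u, w⟫ = 0) :
    ∃ t : ℝ, w = t • u := by
  have hu' : ⟪u, u⟫ ≠ 0 := inner_self_ne_zero.mpr hu
  refine ⟨⟪w, u⟫ / ⟪u, u⟫, ?_⟩
  rw [inner_rot_eq] at h
  simp only [inner_eq_coords] at hu' ⊢
  ext i; fin_cases i <;> simp only [PiLp.smul_apply, smul_eq_mul, Fin.zero_eta, Fin.mk_one] <;>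
    rw [div_mul_eq_mul_div, eq_div_iff hu']
  · linear_combination (-u 1) * h
  · linear_combination u 0 * h

lemma norm_dir (θ : ℝ) : ‖dir θ‖ = 1 := by
  simp [EuclideanSpace.norm_eq, dir]

lemma reflect_eq_reflection {ν : E2} (hν : ‖ν‖ = 1) (v : E2) :
    reflect ν v = (ℝ ∙ ν)ᗮ.reflection v := by
  rw [Submodule.reflection_orthogonal_apply, Submodule.reflection_singleton_apply, hν, reflect,
    real_inner_comm]
  simp only [one_pow, div_one, RCLike.ofReal_real_eq_id, id]
  module

lemma reflect_reflect {ν : E2} (hν : ‖ν‖ = 1) (v : E2) : reflect ν (reflect ν v) = v := by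
  simp only [reflect_eq_reflection hν, Submodule.reflection_reflection]

lemma reflect_smul (ν : E2) (c : ℝ) (v : E2) : reflect ν (c • v) = c • reflect ν v := by
  simp only [reflect, real_inner_smul_left]; module

lemma reflect_normalize_sub {a b : E2} (h : ‖a‖ = ‖b‖) (hab : a ≠ b) :
    reflect (‖b - a‖⁻¹ • (b - a)) a = b := by
  have hba : b - a ≠ 0 := sub_ne_zero.mpr hab.symm
  rw [reflect_eq_reflection (by simpa using norm_smul_inv_norm (𝕜 := ℝ) hba)]
  have : ‖b - a‖⁻¹ • (b - a) = (-‖b - a‖⁻¹) • (a - b) := by module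
  simp only [this, Submodule.span_singleton_smul_eq (by simpa using hba : IsUnit (-‖b - a‖⁻¹)),
    Submodule.reflection_sub h]

lemma inner_rot_reflect {ν : E2} (hν : ‖ν‖ = 1) (u w : E2) :
    ⟪rot (reflect ν u), reflect ν w⟫ = -⟪rot u, w⟫ := by
  have h1 : ν 0 ^ 2 + ν 1 ^ 2 = 1 := by
    have := real_inner_self_eq_norm_sq ν
    rw [inner_eq_coords, hν] at this
    linear_combination this
  rw [inner_rot_eq, inner_rot_eq]
  simp only [reflect, inner_eq_coords, PiLp.sub_apply, PiLp.smul_apply, smul_eq_mul]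
  linear_combination (-2 * (u 0 * w 1 - u 1 * w 0)) * h1

section InnerProductSpace

variable {E : Type*} [NormedAddCommGroup E] [InnerProductSpace ℝ E]

lemma inner_sub_pos_of_mem_interior {s : Set E} {n q x : E} (hn : n ≠ 0)
    (hs : ∀ y ∈ s, 0 ≤ ⟪n, y - q⟫) (hx : x ∈ interior s) : 0 < ⟪n, x - q⟫ := by
  have hline : Tendsto (fun t : ℝ => x + t • n) (𝓝[<] 0) (𝓝 x) := by
    have : Continuous (fun t : ℝ => x + t • n) := by fun_prop
    simpa using (this.tendsto 0).mono_left nhdsWithin_le_nhds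
  obtain ⟨t, hxt, ht⟩ :=
    ((hline.eventually (isOpen_interior.mem_nhds hx)).and self_mem_nhdsWithin).exists
  have key := hs _ (interior_subset hxt)
  rw [add_sub_right_comm, inner_add_right, real_inner_smul_right, real_inner_self_eq_norm_sq] at key
  nlinarith [mul_neg_of_neg_of_pos (Set.mem_Iio.mp ht) (pow_pos (norm_pos_iff.mpr hn) 2)]

lemma exists_mem_openSegment_inner_sub_eq_zero {n q x p : E}
    (h : ⟪n, x - q⟫ * ⟪n, p - q⟫ < 0) : ∃ z ∈ openSegment ℝ x p, ⟪n, z - q⟫ = 0 := by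
  set f := ⟪n, x - q⟫
  set g := ⟪n, p - q⟫
  have hD : 0 < (f - g) ^ 2 := by nlinarith [sq_nonneg (f + g)]
  set a := (g ^ 2 - f * g) / (f - g) ^ 2
  set b := (f ^ 2 - f * g) / (f - g) ^ 2
  have hab : a + b = 1 := by
    rw [← add_div, div_eq_one_iff_eq hD.ne']; ring
  have hfg : a * f + b * g = 0 := by
    rw [div_mul_eq_mul_div, div_mul_eq_mul_div, ← add_div, div_eq_zero_iff]; left; ring
  refine ⟨a • x + b • p,
    ⟨a, b, div_pos (by nlinarith) hD, div_pos (by nlinarith) hD, hab, rfl⟩, ?_⟩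
  clear_value a b
  calc ⟪n, a • x + b • p - q⟫ = ⟪n, a • (x - q) + b • (p - q) + (a + b - 1) • q⟫ := by
        congr 1; module
    _ = 0 := by
      rw [hab, sub_self, zero_smul, add_zero, inner_add_right, real_inner_smul_right,
        real_inner_smul_right, hfg]

end InnerProductSpace

lemma exists_pos_smul_eq_of_inner_rot_eq_zero {H : Set E2} (hconv : Convex ℝ H) {q d w : E2}
    (hq : q ∉ H) {r : ℝ} (hr : 0 < r) (hd : q + r • d ∈ H) (hw : q + w ∈ H)
    (hwd : ⟪rot d, w⟫ = 0) : ∃ t : ℝ, 0 < t ∧ w = t • d := by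
  have hd0 : d ≠ 0 := by
    rintro rfl
    rw [smul_zero, add_zero] at hd
    exact hq hd
  obtain ⟨t, rfl⟩ := exists_eq_smul_of_inner_rot_eq_zero hd0 hwd
  refine ⟨t, lt_of_not_ge fun ht => hq ?_, rfl⟩
  have hrt : 0 < r - t := by linarith
  -- `q` lies on the segment from `q + t • d` to `q + r • d`
  have hseg := hconv.add_smul_mem hw (y := (r - t) • d) (by convert hd using 1; module)
    (t := -t / (r - t)) ⟨div_nonneg (neg_nonneg.mpr ht) hrt.le, (div_le_one hrt).mpr (by linarith)⟩
  convert hseg using 1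
  rw [smul_smul, div_mul_cancel₀ _ hrt.ne']
  module

/-- `H` lies in the wedge with apex `q` between the lines through `q` with directions `a` and
`b`, and touches the ray arriving at `q` along `a` and the ray leaving `q` along `b`. -/
structure SupportingWedge (H : Set E2) (q a b : E2) : Prop where
  not_mem : q ∉ H
  mem_ray_fst : ∃ r : ℝ, 0 < r ∧ q - r • a ∈ H
  mem_ray_snd : ∃ r : ℝ, 0 < r ∧ q + r • b ∈ H
  inner_rot_fst_nonneg : ∀ y ∈ H, 0 ≤ ⟪rot a, y - q⟫
  inner_rot_snd_nonneg : ∀ y ∈ H, 0 ≤ ⟪rot b, y - q⟫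

namespace SupportingWedge

variable {H : Set E2} {q a b : E2}

lemma fst_ne_zero (hW : SupportingWedge H q a b) : a ≠ 0 := by
  obtain ⟨r, -, hr⟩ := hW.mem_ray_fst
  rintro rfl
  rw [smul_zero, sub_zero] at hr
  exact hW.not_mem hr

lemma snd_ne_zero (hW : SupportingWedge H q a b) : b ≠ 0 := by
  obtain ⟨r, -, hr⟩ := hW.mem_ray_snd
  rintro rfl
  rw [smul_zero, add_zero] at hr
  exact hW.not_mem hr

lemma exists_pos_smul_mem (hW : SupportingWedge H q a b) {S : Set E2} {x u : E2} (hSH : S ⊆ H)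
    (hx : x ∈ S) (hS : ∀ p ∈ H, openSegment ℝ x p ⊆ S) (hua : 0 < ⟪rot a, u⟫)
    (hub : 0 < ⟪rot b, u⟫) : ∃ t : ℝ, 0 < t ∧ q + t • u ∈ S := by
  obtain ⟨r₁, hr₁, h₁⟩ := hW.mem_ray_fst
  obtain ⟨r₂, hr₂, h₂⟩ := hW.mem_ray_snd
  have hf₁ : 0 < ⟪rot u, q - r₁ • a - q⟫ := by
    rw [sub_sub_cancel_left, inner_neg_right, real_inner_smul_right, inner_rot_swap]
    nlinarith
  have hf₂ : ⟪rot u, q + r₂ • b - q⟫ < 0 := by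
    rw [add_sub_cancel_left, real_inner_smul_right, inner_rot_swap]
    nlinarith
  -- the line through `q` along `u` separates the two touching points
  obtain ⟨z, hzS, hz⟩ : ∃ z ∈ S, ⟪rot u, z - q⟫ = 0 := by
    rcases lt_trichotomy ⟪rot u, x - q⟫ 0 with hneg | hzero | hpos
    · obtain ⟨z, hz, hz0⟩ :=
        exists_mem_openSegment_inner_sub_eq_zero (mul_neg_of_neg_of_pos hneg hf₁)
      exact ⟨z, hS _ h₁ hz, hz0⟩
    · exact ⟨x, hx, hzero⟩
    · obtain ⟨z, hz, hz0⟩ :=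
        exists_mem_openSegment_inner_sub_eq_zero (mul_neg_of_pos_of_neg hpos hf₂)
      exact ⟨z, hS _ h₂ hz, hz0⟩
  have hu : u ≠ 0 := by
    rintro rfl
    rw [inner_zero_right] at hua
    exact hua.false
  obtain ⟨t, ht⟩ := exists_eq_smul_of_inner_rot_eq_zero hu hz
  have hta := hW.inner_rot_fst_nonneg z (hSH hzS)
  rw [ht, real_inner_smul_right] at hta
  have ht0 : t ≠ 0 := by
    rintro rfl
    rw [zero_smul, sub_eq_zero] at ht
    exact hW.not_mem (ht ▸ hSH hzS)
  refine ⟨t, lt_of_le_of_ne (nonneg_of_mul_nonneg_left hta hua) ht0.symm, ?_⟩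
  rwa [← ht, add_sub_cancel]

variable {ν : E2}

lemma exists_pos_smul_reflect_mem (hW : SupportingWedge H q a b) (hν : ‖ν‖ = 1)
    (hab : reflect ν a = b) {S : Set E2} {w : E2} (hSH : S ⊆ H) (hw : q + w ∈ S)
    (hS : ∀ p ∈ H, openSegment ℝ (q + w) p ⊆ S) (hwa : 0 < ⟪rot a, w⟫) (hwb : 0 < ⟪rot b, w⟫) :
    ∃ t : ℝ, 0 < t ∧ q - t • reflect ν w ∈ S := by
  have hba : reflect ν b = a := hab ▸ reflect_reflect hν a
  have hua : ⟪rot a, -reflect ν w⟫ = ⟪rot b, w⟫ := by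
    rw [inner_neg_right, ← hba, inner_rot_reflect hν, neg_neg]
  have hub : ⟪rot b, -reflect ν w⟫ = ⟪rot a, w⟫ := by
    rw [inner_neg_right, ← hab, inner_rot_reflect hν, neg_neg]
  obtain ⟨t, ht, hmem⟩ := hW.exists_pos_smul_mem hSH hw hS (hua ▸ hwb) (hub ▸ hwa)
  exact ⟨t, ht, by rwa [smul_neg, ← sub_eq_add_neg] at hmem⟩

lemma exists_pos_smul_reflect_mem_interior (hconv : Convex ℝ H) (hW : SupportingWedge H q a b)
    (hν : ‖ν‖ = 1) (hab : reflect ν a = b) {w : E2} (hw : q + w ∈ interior H) :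
    ∃ t : ℝ, 0 < t ∧ q - t • reflect ν w ∈ interior H := by
  have hwa :=
    inner_sub_pos_of_mem_interior (rot_ne_zero hW.fst_ne_zero) hW.inner_rot_fst_nonneg hw
  have hwb :=
    inner_sub_pos_of_mem_interior (rot_ne_zero hW.snd_ne_zero) hW.inner_rot_snd_nonneg hw
  rw [add_sub_cancel_left] at hwa hwb
  exact hW.exists_pos_smul_reflect_mem hν hab interior_subset hw
    (fun p hp => hconv.openSegment_interior_self_subset_interior hw hp) hwa hwb

lemma exists_pos_smul_reflect_mem_of_mem (hconv : Convex ℝ H) (hW : SupportingWedge H q a b)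
    (hν : ‖ν‖ = 1) (hab : reflect ν a = b) {w : E2} (hw : q + w ∈ H) :
    ∃ t : ℝ, 0 < t ∧ q - t • reflect ν w ∈ H := by
  have hba : reflect ν b = a := hab ▸ reflect_reflect hν a
  obtain ⟨r₁, hr₁, h₁⟩ := hW.mem_ray_fst
  obtain ⟨r₂, hr₂, h₂⟩ := hW.mem_ray_snd
  have hwa := hW.inner_rot_fst_nonneg _ hw
  have hwb := hW.inner_rot_snd_nonneg _ hw
  rw [add_sub_cancel_left] at hwa hwb
  rcases hwa.eq_or_lt with hwa | hwa
  · -- `w` points back along the arriving ray, so the reflected ray runs along the leaving one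
    obtain ⟨s, hs, rfl⟩ := exists_pos_smul_eq_of_inner_rot_eq_zero hconv hW.not_mem hr₁
      (by rwa [smul_neg, ← sub_eq_add_neg]) hw (by rw [rot_neg, inner_neg_left, ← hwa, neg_zero])
    refine ⟨r₂ / s, div_pos hr₂ hs, ?_⟩
    convert h₂ using 1
    rw [smul_neg, ← neg_smul, reflect_smul, hab, smul_smul, mul_neg, div_mul_cancel₀ _ hs.ne',
      neg_smul, sub_neg_eq_add]
  rcases hwb.eq_or_lt with hwb | hwb
  · obtain ⟨s, hs, rfl⟩ := exists_pos_smul_eq_of_inner_rot_eq_zero hconv hW.not_mem hr₂ h₂ hw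
      hwb.symm
    refine ⟨r₁ / s, div_pos hr₁ hs, ?_⟩
    rwa [reflect_smul, hba, smul_smul, div_mul_cancel₀ _ hs.ne']
  exact hW.exists_pos_smul_reflect_mem hν hab subset_rfl hw
    (fun p hp => hconv.openSegment_subset hw hp) hwa hwb

end SupportingWedge

lemma IsArcLengthParam.mem_of_mem_Ico {h : ℝ → E2} {L : ℝ} {H : Set E2}
    (hp : IsArcLengthParam h L H) (hH : IsClosed H) {t : ℝ} (ht : t ∈ Set.Ico 0 L) : h t ∈ H :=
  hH.frontier_subset (hp.1 ▸ mem_image_of_mem h (Ico_subset_Icc_self ht))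

theorem reflection_preserves_tangency_and_splits_general (H : Set E2)
    (hconv : Convex ℝ H) (hcomp : IsCompact H)
    (L : ℝ) (h : ℝ → E2) (hparam : IsArcLengthParam h L H)
    (q : E2) (hq : q ∉ H) (θpv θmv tpv tmv : ℝ)
    (htpv : tpv ∈ Set.Ico 0 L) (htmv : tmv ∈ Set.Ico 0 L)
    -- `q` lies on the anticlockwise supporting ray touching `∂H` at `h tpv`
    (hrayp : ∃ r : ℝ, 0 < r ∧ q = h tpv + r • dir θpv)
    -- `q` lies behind the clockwise supporting ray touching `∂H` at `h tmv`
    (hraym : ∃ r : ℝ, 0 < r ∧ q = h tmv - r • dir θmv)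
    (hsupp : ∀ x ∈ H, 0 ≤ ⟪rot (dir θpv), x - h tpv⟫)
    (hsupm : ∀ x ∈ H, 0 ≤ ⟪rot (dir θmv), x - h tmv⟫)
    (hne : dir θpv ≠ dir θmv)
    -- the (inward) unit normal at `q` bisects the two supporting lines
    (ν : E2) (hν : ν = ‖dir θmv - dir θpv‖⁻¹ • (dir θmv - dir θpv)) :
    -- a segment tangent to `H` reflects to a segment tangent to `H`
    reflect ν (dir θpv) = dir θmv ∧
    -- chords through the interior of `H` reflect to chords through `H`, and
    -- chords missing `H` reflect to chords missing `H`
    (∀ v : E2, ‖v‖ = 1 → ⟪v, ν⟫ < 0 →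
      ((∃ s : ℝ, 0 < s ∧ q - s • v ∈ interior H) →
        ∃ s : ℝ, 0 < s ∧ q + s • reflect ν v ∈ interior H) ∧
      ((∀ s : ℝ, 0 < s → q - s • v ∉ H) →
        ∀ s : ℝ, 0 < s → q + s • reflect ν v ∉ H)) := by
  obtain ⟨rp, hrp, hqp⟩ := hrayp
  obtain ⟨rm, hrm, hqm⟩ := hraym
  have hW : SupportingWedge H q (dir θpv) (dir θmv) :=
    { not_mem := hq
      mem_ray_fst := ⟨rp, hrp, by
        rw [hqp, add_sub_cancel_right]; exact hparam.mem_of_mem_Ico hcomp.isClosed htpv⟩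
      mem_ray_snd := ⟨rm, hrm, by
        rw [hqm, sub_add_cancel]; exact hparam.mem_of_mem_Ico hcomp.isClosed htmv⟩
      inner_rot_fst_nonneg := fun y hy => by rw [hqp, inner_rot_sub_add_smul]; exact hsupp y hy
      inner_rot_snd_nonneg := fun y hy => by
        rw [hqm, sub_eq_add_neg (h tmv), ← neg_smul, inner_rot_sub_add_smul]; exact hsupm y hy }
  have hν1 : ‖ν‖ = 1 := hν ▸ norm_smul_inv_norm (𝕜 := ℝ) (sub_ne_zero.mpr hne.symm)
  have hab : reflect ν (dir θpv) = dir θmv :=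
    hν ▸ reflect_normalize_sub (by rw [norm_dir, norm_dir]) hne
  refine ⟨hab, fun v _ _ => ⟨?_, ?_⟩⟩
  · rintro ⟨s, hs, hx⟩
    obtain ⟨t, ht, hmem⟩ := hW.exists_pos_smul_reflect_mem_interior hconv hν1 hab
      (w := -(s • v)) (by rwa [← sub_eq_add_neg])
    refine ⟨t * s, mul_pos ht hs, ?_⟩
    rwa [← neg_smul, reflect_smul, smul_smul, mul_neg, neg_smul, sub_neg_eq_add] at hmem
  · intro hmiss s hs hy
    obtain ⟨t, ht, hmem⟩ := hW.exists_pos_smul_reflect_mem_of_mem hconv hν1 hab hy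
    rw [reflect_smul, reflect_reflect hν1, smul_smul] at hmem
    exact hmiss (t * s) (mul_pos ht hs) hmem

/-- Tangency is preserved by reflection on the boundary of the table `K_λ`: at a
boundary point `q`, whose normal bisects the two supporting lines of `H` through
`q`, a trajectory arriving along the anticlockwise supporting ray (tangent to `H`)
reflects into the clockwise supporting line (again tangent to `H`); consequently an
incoming chord crossing the interior of `H` reflects to a chord again crossing `H`,
and an incoming chord missing `H` reflects to a chord missing `H`. -/
theorem reflection_preserves_tangency_and_splits (H : Set E2)
    (hconv : Convex ℝ H) (hcomp : IsCompact H) (hint : (interior H).Nonempty)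
    (L : ℝ) (hL : 0 < L) (h : ℝ → E2) (hparam : IsArcLengthParam h L H)
    (q : E2) (hq : q ∉ H) (θpv θmv tpv tmv : ℝ)
    (htpv : tpv ∈ Set.Ico 0 L) (htmv : tmv ∈ Set.Ico 0 L)
    -- `q` lies on the anticlockwise supporting ray touching `∂H` at `h tpv`
    (hrayp : ∃ r : ℝ, 0 < r ∧ q = h tpv + r • dir θpv)
    -- `q` lies behind the clockwise supporting ray touching `∂H` at `h tmv`
    (hraym : ∃ r : ℝ, 0 < r ∧ q = h tmv - r • dir θmv)
    (hsupp : ∀ x ∈ H, 0 ≤ ⟪rot (dir θpv), x - h tpv⟫)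
    (hsupm : ∀ x ∈ H, 0 ≤ ⟪rot (dir θmv), x - h tmv⟫)
    (hne : dir θpv ≠ dir θmv)
    -- the (inward) unit normal at `q` bisects the two supporting lines
    (ν : E2) (hν : ν = ‖dir θmv - dir θpv‖⁻¹ • (dir θmv - dir θpv)) :
    -- a segment tangent to `H` reflects to a segment tangent to `H`
    reflect ν (dir θpv) = dir θmv ∧
    -- chords through the interior of `H` reflect to chords through `H`, and
    -- chords missing `H` reflect to chords missing `H`
    (∀ v : E2, ‖v‖ = 1 → ⟪v, ν⟫ < 0 →
      ((∃ s : ℝ, 0 < s ∧ q - s • v ∈ interior H) →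
        ∃ s : ℝ, 0 < s ∧ q + s • reflect ν v ∈ interior H) ∧
      ((∀ s : ℝ, 0 < s → q - s • v ∉ H) →
        ∀ s : ℝ, 0 < s → q + s • reflect ν v ∉ H)) :=
  reflection_preserves_tangency_and_splits_general H hconv hcomp L h hparam q hq θpv θmv tpv tmv
    htpv htmv hrayp hraym hsupp hsupm hne ν hν

end
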